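/- arXiv:2112.10579 — 2 statements merged into one kernel-verified Lean document; each statement's English description precedes it below -/
import Mathlib

section
/- If f : (0,∞) → ℝ satisfies f(a+b) = f(a) + f(b) for all a,b > 0 and f is Lebesgue measurable on some compact interval [c,d] ⊂ (0,∞) with c < d, then f(r) = f(1)·r for all r > 0. -/
/-!
Extend `f` to an additive map `F : ℝ → ℝ` by `F (a - b) = f a - f b` for `a, b > 0`.
Measurability on `[c, d]` gives a set `A ⊆ [c, d]` of positive measure on which `f` is bounded,
so `F` is bounded on `A - A`, which is a neighbourhood of `0` by Steinhaus' theorem.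
An additive map bounded near `0` is continuous, hence `ℝ`-linear.
-/

open MeasureTheory Set Bornology Pointwise

lemma MeasureTheory.AEMeasurable.exists_measurableSet_pos_isBounded_image {α E : Type*}
    [MeasurableSpace α] [SeminormedAddCommGroup E] [MeasurableSpace E] [OpensMeasurableSpace E]
    {μ : Measure α} {f : α → E} (hf : AEMeasurable f μ) (hμ : μ ≠ 0) :
    ∃ A, MeasurableSet A ∧ 0 < μ A ∧ IsBounded (f '' A) := by
  obtain ⟨n, hn⟩ : ∃ n : ℕ, 0 < μ (hf.mk f ⁻¹' Metric.closedBall 0 n) := by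
    by_contra!
    simp_rw [nonpos_iff_eq_zero, ← measure_iUnion_null_iff, ← preimage_iUnion,
      Metric.iUnion_closedBall_nat, preimage_univ, Measure.measure_univ_eq_zero] at this
    exact hμ this
  set N := toMeasurable μ {x | f x ≠ hf.mk f x}
  have hN : μ N = 0 := by rw [measure_toMeasurable]; exact hf.ae_eq_mk
  refine ⟨hf.mk f ⁻¹' Metric.closedBall 0 n \ N,
    (hf.measurable_mk Metric.isClosed_closedBall.measurableSet).diff
      (measurableSet_toMeasurable _ _), by rwa [measure_sdiff_null hN], ?_⟩
  refine (Metric.isBounded_closedBall (x := (0 : E)) (r := n)).subset ?_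
  rintro _ ⟨x, ⟨hx, hxN⟩, rfl⟩
  have hfx : f x = hf.mk f x := by_contra fun h ↦ hxN (subset_toMeasurable _ _ h)
  rwa [hfx]

lemma AddMonoidHom.continuous_of_isBounded_image_of_addHaar_pos {E H : Type*}
    [NormedAddCommGroup E] [MeasurableSpace E] [BorelSpace E] [LocallyCompactSpace E]
    [SeminormedAddCommGroup H] [NormedSpace ℝ H]
    (μ : Measure E) [μ.IsAddHaarMeasure] [μ.InnerRegular] (f : E →+ H) {A : Set E}
    (hA : MeasurableSet A) (hμA : 0 < μ A) (hfA : IsBounded (f '' A)) : Continuous f :=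
  f.continuous_of_isBounded_nhds_zero (Measure.sub_mem_nhds_zero_of_addHaar_pos μ A hA hμA)
    (by rw [image_sub]; exact hfA.sub hfA)

namespace AddOnPos

def extend (f : ℝ → ℝ) (x : ℝ) : ℝ := f (x + (|x| + 1)) - f (|x| + 1)

variable {f : ℝ → ℝ} (hadd : ∀ a b : ℝ, 0 < a → 0 < b → f (a + b) = f a + f b)
include hadd

lemma sub_eq_sub {a b a' b' : ℝ} (ha : 0 < a) (hb : 0 < b) (ha' : 0 < a') (hb' : 0 < b')
    (h : a - b = a' - b') : f a - f b = f a' - f b' := by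
  have := hadd a b' ha hb'
  rw [show a + b' = a' + b by linarith, hadd a' b ha' hb] at this
  linarith

lemma extend_sub {a b : ℝ} (ha : 0 < a) (hb : 0 < b) : extend f (a - b) = f a - f b :=
  sub_eq_sub hadd (by linarith [neg_abs_le (a - b)]) (by positivity) ha hb (by ring)

def extendHom : ℝ →+ ℝ where
  toFun := extend f
  map_zero' := by simp [extend]
  map_add' x y := by
    have hx : 0 < x + (|x| + 1) := by linarith [neg_abs_le x]
    have hy : 0 < y + (|y| + 1) := by linarith [neg_abs_le y]
    have ex : extend f x = f (x + (|x| + 1)) - f (|x| + 1) := rfl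
    have ey : extend f y = f (y + (|y| + 1)) - f (|y| + 1) := rfl
    have hxy : x + y = (x + (|x| + 1) + (y + (|y| + 1))) - ((|x| + 1) + (|y| + 1)) := by ring
    rw [ex, ey, hxy, extend_sub hadd (add_pos hx hy) (by positivity), hadd _ _ hx hy,
      hadd (|x| + 1) (|y| + 1) (by positivity) (by positivity)]
    ring

lemma extendHom_apply_of_pos {x : ℝ} (hx : 0 < x) : extendHom hadd x = f x := by
  change extend f x = f x
  have := extend_sub hadd (add_pos hx one_pos) one_pos
  rw [add_sub_cancel_right, hadd x 1 hx one_pos] at this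
  linarith

end AddOnPos

theorem stmt1 (f : ℝ → ℝ)
    (hadd : ∀ a b : ℝ, 0 < a → 0 < b → f (a + b) = f a + f b)
    (hreg : ∃ c d : ℝ, 0 < c ∧ c < d ∧
      AEMeasurable f (MeasureTheory.volume.restrict (Set.Icc c d))) :
    ∀ r : ℝ, 0 < r → f r = f 1 * r := by
  obtain ⟨c, d, hc, hcd, hmeas⟩ := hreg
  obtain ⟨A, hA, hμA, hfA⟩ := hmeas.exists_measurableSet_pos_isBounded_image <| by
    simp [Measure.restrict_eq_zero, Real.volume_Icc, hcd]
  rw [Measure.restrict_apply hA] at hμA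
  have hpos : ∀ x ∈ A ∩ Icc c d, 0 < x := fun x hx ↦ hc.trans_le hx.2.1
  have hcont : Continuous (AddOnPos.extendHom hadd) := by
    refine (AddOnPos.extendHom hadd).continuous_of_isBounded_image_of_addHaar_pos volume
      (hA.inter measurableSet_Icc) hμA ?_
    rw [image_congr fun x hx ↦ AddOnPos.extendHom_apply_of_pos hadd (hpos x hx)]
    exact hfA.subset (image_mono inter_subset_left)
  intro r hr
  have := map_real_smul (AddOnPos.extendHom hadd) hcont r 1
  rwa [smul_eq_mul, mul_one, smul_eq_mul, AddOnPos.extendHom_apply_of_pos hadd hr,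
    AddOnPos.extendHom_apply_of_pos hadd one_pos, mul_comm] at this
end

section
/- Let n ≥ 2 and let Z be an SL(n) covariant map from polytopes containing the origin in ℝⁿ to functions on ℝⁿ \ {0}. If P is a polytope containing the origin whose linear hull is span{e₁,…,e_d} with 0 ≤ d ≤ n−2, then for every x = r₁e₁ + ⋯ + r_ne_n ≠ 0 with r₁e₁ + ⋯ + r_de_d = 0, one has ZP(x) = ZP(e_n). -/
/-!
A polytope lying in the coordinate subspace `span {e₁, …, e_d}` is fixed pointwise by every
transvection `I + c E_{ji}` with `i > d`, so by covariance `ZP` is invariant under the transposed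
shears `x ↦ x + c xⱼ eᵢ`, `i > d`. Since at least two coordinates `i > d` are available, these
shears move any nonzero `x` with `x₁ = ⋯ = x_d = 0` to `e_n`: first make the last coordinate `1`
using some other nonzero coordinate (creating one if `x` is a multiple of `e_n`), then clear all
other coordinates using the last one.
-/

open Matrix

/-- A polytope: the convex hull of a nonempty finite set of points. -/
def IsPolytope {n : ℕ} (P : Set (Fin n → ℝ)) : Prop :=
  ∃ S : Finset (Fin n → ℝ), S.Nonempty ∧ P = convexHull ℝ (S : Set _)

section Shear

variable {ι K α : Type*} [DecidableEq ι] [Field K]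

def ShearInvariantOn (f : (ι → K) → α) (T : Finset ι) : Prop :=
  ∀ i ∈ T, ∀ j, j ≠ i → ∀ (c : K) (v : ι → K), v ≠ 0 → f (v + (c * v j) • Pi.single i 1) = f v

namespace ShearInvariantOn

variable {f : (ι → K) → α} {T : Finset ι}

theorem apply_update (hf : ShearInvariantOn f T) {v : ι → K} {k m : ι} (hm : m ∈ T)
    (hkm : k ≠ m) (hk : v k ≠ 0) (a : K) : f (Function.update v m a) = f v := by
  have hshear : Function.update v m a = v + ((a - v m) / v k * v k) • Pi.single m 1 := by
    ext i
    by_cases hi : i = m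
    · subst hi
      simp [hk]
    · simp [hi]
  rw [hshear]
  exact hf m hm k hkm _ v fun h => hk (by simp [h])

theorem apply_piecewise_zero (hf : ShearInvariantOn f T) {v : ι → K} {m : ι} (hv : v m ≠ 0)
    {S : Finset ι} (hST : S ⊆ T) (hmS : m ∉ S) : f (S.piecewise 0 v) = f v := by
  induction S using Finset.induction_on with
  | empty => simp
  | insert a S _ ih =>
    have hma : m ≠ a := fun h => hmS (h ▸ Finset.mem_insert_self a S)
    have hmS' : m ∉ S := fun h => hmS (Finset.mem_insert_of_mem h)
    rw [Finset.piecewise_insert, Pi.zero_apply,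
      hf.apply_update (hST (Finset.mem_insert_self a S)) hma
        (by rwa [Finset.piecewise_eq_of_notMem _ _ _ hmS']),
      ih ((Finset.subset_insert a S).trans hST) hmS']

theorem apply_eq_single_of_ne (hf : ShearInvariantOn f T) {v : ι → K} {k m : ι} (hm : m ∈ T)
    (hsupp : ∀ i ∉ T, v i = 0) (hkm : k ≠ m) (hk : v k ≠ 0) :
    f v = f (Pi.single m (1 : K)) := by
  have hclear : (T.erase m).piecewise (0 : ι → K) (Function.update v m 1) = Pi.single m 1 := by
    ext i
    by_cases him : i = m
    · subst him
      simp
    · by_cases hiT : i ∈ T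
      · simp [him, hiT]
      · simp [him, hiT, hsupp i hiT]
  rw [← hf.apply_update hm hkm hk 1, ← hclear,
    hf.apply_piecewise_zero (by simp) (Finset.erase_subset m T) (Finset.notMem_erase m T)]

theorem apply_eq_single (hf : ShearInvariantOn f T) {v : ι → K} {m m' : ι} (hm : m ∈ T)
    (hm' : m' ∈ T) (hmm' : m' ≠ m) (hsupp : ∀ i ∉ T, v i = 0) (hv : v ≠ 0) :
    f v = f (Pi.single m (1 : K)) := by
  obtain ⟨k, hk⟩ := Function.ne_iff.mp hv
  by_cases hkm : k = m
  · subst hkm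
    rw [← hf.apply_update hm' hmm'.symm hk 1]
    refine hf.apply_eq_single_of_ne hm (fun i hi => ?_) hmm' (by simp)
    have hi' : i ≠ m' := fun h => hi (h ▸ hm')
    simp [hi', hsupp i hi]
  · exact hf.apply_eq_single_of_ne hm hsupp hkm hk

end ShearInvariantOn

end Shear

theorem apply_eq_zero_of_mem_span_single {ι K : Type*} [DecidableEq ι] [Semiring K] {q : ι → Prop}
    {w : ι → K} (hw : w ∈ Submodule.span K {v | ∃ i, q i ∧ v = Pi.single i 1}) {l : ι}
    (hl : ¬ q l) : w l = 0 := by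
  have hle : Submodule.span K {v : ι → K | ∃ i, q i ∧ v = Pi.single i 1} ≤
      Submodule.pi {l | ¬ q l} fun _ => ⊥ := by
    rw [Submodule.span_le]
    rintro _ ⟨i, hi, rfl⟩ l hl
    have hli : l ≠ i := fun h => hl (h ▸ hi)
    simp [hli]
  simpa using hle hw l hl

theorem Matrix.transvection_mulVec {ι R : Type*} [Fintype ι] [DecidableEq ι] [CommRing R]
    (i j : ι) (c : R) (v : ι → R) :
    transvection i j c *ᵥ v = v + (c * v j) • Pi.single i 1 := by
  rw [transvection, add_mulVec, one_mulVec, single_mulVec_eq]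

theorem Matrix.transpose_transvection {ι R : Type*} [DecidableEq ι] [CommRing R]
    (i j : ι) (c : R) : (transvection i j c)ᵀ = transvection j i c := by
  rw [transvection, transpose_add, transpose_one, transpose_single, transvection]

def IsSLCovariant {n : ℕ} (Z : Set (Fin n → ℝ) → (Fin n → ℝ) → ℝ) : Prop :=
  ∀ φ : Matrix (Fin n) (Fin n) ℝ, φ.det = 1 →
    ∀ P : Set (Fin n → ℝ), IsPolytope P → (0 : Fin n → ℝ) ∈ P →
    ∀ x : Fin n → ℝ, x ≠ 0 → Z ((fun y => φ *ᵥ y) '' P) x = Z P (φᵀ *ᵥ x)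

theorem IsSLCovariant.shearInvariantOn {n : ℕ} {Z : Set (Fin n → ℝ) → (Fin n → ℝ) → ℝ}
    (hZ : IsSLCovariant Z) {P : Set (Fin n → ℝ)} (hP : IsPolytope P) (h0 : (0 : Fin n → ℝ) ∈ P)
    {T : Finset (Fin n)} (hPT : ∀ p ∈ P, ∀ i ∈ T, p i = 0) : ShearInvariantOn (Z P) T := by
  intro i hi j hji c v hv
  have hfix : (fun y => transvection j i c *ᵥ y) '' P = P := by
    refine (Set.image_congr fun p hp => ?_).trans (Set.image_id P)
    simp [transvection_mulVec, hPT p hp i hi]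
  have := hZ _ (det_transvection_of_ne j i hji c) P hP h0 v hv
  rw [hfix, transpose_transvection, transvection_mulVec] at this
  exact this.symm

theorem stmt17 {n : ℕ} (hn : 2 ≤ n)
    (Z : Set (Fin n → ℝ) → (Fin n → ℝ) → ℝ)
    (hcov : ∀ φ : Matrix (Fin n) (Fin n) ℝ, φ.det = 1 →
      ∀ P : Set (Fin n → ℝ), IsPolytope P → (0 : Fin n → ℝ) ∈ P →
      ∀ x : Fin n → ℝ, x ≠ 0 → Z ((fun y => φ *ᵥ y) '' P) x = Z P (φᵀ *ᵥ x))
    (P : Set (Fin n → ℝ)) (hP : IsPolytope P) (h0 : (0 : Fin n → ℝ) ∈ P)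
    (d : ℕ) (hd : d ≤ n - 2)
    (hspan : Submodule.span ℝ P =
      Submodule.span ℝ {v : Fin n → ℝ | ∃ i : Fin n, (i : ℕ) < d ∧ v = Pi.single i 1})
    (x : Fin n → ℝ) (hx : x ≠ 0) (hx' : ∀ i : Fin n, (i : ℕ) < d → x i = 0) :
    Z P x = Z P (Pi.single (Fin.mk (n - 1) (by omega)) 1) := by
  set T := Finset.univ.filter fun i : Fin n => d ≤ (i : ℕ)
  have hPT : ∀ p ∈ P, ∀ i ∈ T, p i = 0 := fun p hp i hi =>
    apply_eq_zero_of_mem_span_single (hspan ▸ Submodule.subset_span hp)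
      (by simpa [T] using hi)
  exact (IsSLCovariant.shearInvariantOn hcov hP h0 hPT).apply_eq_single (m' := ⟨d, by omega⟩)
    (by simp [T]; omega) (by simp [T]) (by simp [Fin.ext_iff]; omega)
    (fun i hi => hx' i (by simpa [T] using hi)) hx
end
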